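/- Crude per-round growth bound for the scale: under the NormalHedge dynamics, if for some round t₀ and some constant 0 < δ ≤ 1/2 one has c_{t₀} ≥ (16 ln N)/δ², then for every round t ≥ t₀, c_{t+1} − c_t ≤ e^δ(4 + 2 ln N). -/

import Mathlib

open Real Finset Filter

/-- The NormalHedge dynamics with `N` actions.  Rounds are indexed by `t = 1, 2, …`;
`loss i t` is the loss of action `i` in round `t`, `p i t` its weight in round `t`,
`R i t` its cumulative regret after `t` rounds, and `c t` the scale parameter. -/
structure NormalHedge (N : ℕ) where
  hN : 2 ≤ N
  loss : Fin N → ℕ → ℝ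
  p : Fin N → ℕ → ℝ
  R : Fin N → ℕ → ℝ
  c : ℕ → ℝ
  loss_mem : ∀ i t, 1 ≤ t → loss i t ∈ Set.Icc (0 : ℝ) 1
  p_one : ∀ i, p i 1 = 1 / N
  R_zero : ∀ i, R i 0 = 0
  R_rec : ∀ i t, R i (t + 1) = R i t + ((∑ j, p j (t + 1) * loss j (t + 1)) - loss i (t + 1))
  c_pos : ∀ t, 1 ≤ t → 0 < c t
  c_eq : ∀ t, 1 ≤ t →
    (1 / N : ℝ) * ∑ i, Real.exp (max (R i t) 0 ^ 2 / (2 * c t)) = Real.exp 1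
  p_rec : ∀ i t, 1 ≤ t →
    p i (t + 1) = (max (R i t) 0 / c t) * Real.exp (max (R i t) 0 ^ 2 / (2 * c t)) /
      ∑ j, (max (R j t) 0 / c t) * Real.exp (max (R j t) 0 ^ 2 / (2 * c t))

/-!
Write `Φ_t(c) = ∑ᵢ exp([R_{i,t}]₊² / (2c))`, so that `Φ_t(c_t) = N e`. The learner has zero
instantaneous regret under its own weights, and these weights are the derivatives of the summands
of `Φ`. Hence a first-order expansion of each summand in the regret increment `r ∈ [-1, 1]` gives
`N e ≤ Φ_{t+1}(c_t) ≤ N e (1 + (4 + 2 ln N) / c_t)`; the second-order error is controlled by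
`[R_{i,t}]₊² ≤ 2 c_t (ln N + 1)`, read off from `Φ_t(c_t) = N e`, which also keeps the exponent
increment in `[-1, 1]` once `c_t ≥ 3 + 2 ln N`. The lower bound makes `c_t` nondecreasing, so
`c_t ≥ c_{t₀} ≥ 64 ln N` for `t ≥ t₀`. With `q = c_{t+1} / c_t ≥ 1`, Jensen's inequality for
`y ↦ y^q` turns `Φ_{t+1}(c_{t+1}) = N e` into `e^q ≤ Φ_{t+1}(c_t) / N`, whence
`q ≤ 1 + (4 + 2 ln N) / c_t`.
-/

lemma two_mul_max_mul_le_sq_max_add_sub (x r : ℝ) :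
    2 * max x 0 * r ≤ max (x + r) 0 ^ 2 - max x 0 ^ 2 := by
  rcases le_total x 0 with hx | hx
  · simp [max_eq_right hx]
  rcases le_total (x + r) 0 with hxr | hxr
  · rw [max_eq_left hx, max_eq_right hxr]; nlinarith
  · rw [max_eq_left hx, max_eq_left hxr]; nlinarith [sq_nonneg r]

lemma sq_max_add_sub_le (x r : ℝ) :
    max (x + r) 0 ^ 2 - max x 0 ^ 2 ≤ 2 * max x 0 * r + r ^ 2 := by
  have h : max (x + r) 0 ≤ |max x 0 + r| :=
    max_le ((add_le_add_left (le_max_left x 0) r).trans (le_abs_self _)) (abs_nonneg _)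
  nlinarith [sq_abs (max x 0 + r), le_max_right (x + r) 0]

lemma sum_mul_weighted_mean_sub_eq_zero {ι : Type*} (s : Finset ι) (w ℓ : ι → ℝ)
    (hw : ∑ i ∈ s, w i ≠ 0) :
    ∑ i ∈ s, w i * (∑ j ∈ s, w j / (∑ k ∈ s, w k) * ℓ j - ℓ i) = 0 := by
  simp only [mul_sub, sum_sub_distrib, ← sum_mul, div_mul_eq_mul_div, ← sum_div]
  field_simp
  ring

namespace NormalHedge

noncomputable def potential (c x : ℝ) : ℝ := exp (max x 0 ^ 2 / (2 * c))

/-- The derivative of `potential c`; normalised, these are the NormalHedge weights. -/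
noncomputable def weight (c x : ℝ) : ℝ := max x 0 / c * potential c x

lemma potential_pos (c x : ℝ) : 0 < potential c x := exp_pos _

lemma weight_nonneg {c : ℝ} (hc : 0 ≤ c) (x : ℝ) : 0 ≤ weight c x :=
  mul_nonneg (div_nonneg (le_max_right x 0) hc) (potential_pos c x).le

lemma potential_add (c x r : ℝ) :
    potential c (x + r) = potential c x * exp ((max (x + r) 0 ^ 2 - max x 0 ^ 2) / (2 * c)) := by
  rw [potential, potential, ← exp_add]
  ring_nf

lemma potential_add_weight_mul_le {c : ℝ} (hc : 0 < c) (x r : ℝ) :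
    potential c x + weight c x * r ≤ potential c (x + r) := by
  set s := (max (x + r) 0 ^ 2 - max x 0 ^ 2) / (2 * c)
  have hs : max x 0 * r / c ≤ s := by
    rw [div_le_div_iff₀ hc (by positivity)]
    nlinarith [two_mul_max_mul_le_sq_max_add_sub x r]
  calc potential c x + weight c x * r = potential c x * (1 + max x 0 * r / c) := by
        rw [weight]; ring
    _ ≤ potential c x * exp s := by
        gcongr
        · exact (exp_pos _).le
        · linarith [add_one_le_exp s]
    _ = potential c (x + r) := (potential_add c x r).symm

lemma potential_add_le {c x r : ℝ} (hc : 0 < c) (hr : |r| ≤ 1)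
    (hx : 2 * max x 0 + 1 ≤ 2 * c) :
    potential c (x + r) ≤ potential c x + weight c x * r +
      potential c x * (1 / (2 * c) + (max x 0 + 1 / 2) ^ 2 / c ^ 2) := by
  set u := max x 0
  set s := (max (x + r) 0 ^ 2 - u ^ 2) / (2 * c)
  set a := (2 * u + 1) / (2 * c)
  have hu : 0 ≤ u := le_max_right x 0
  obtain ⟨hr₁, hr₂⟩ := abs_le.mp hr
  have hs_lower : -a ≤ s := by
    rw [neg_div', div_le_div_iff_of_pos_right (by positivity)]
    nlinarith [two_mul_max_mul_le_sq_max_add_sub x r]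
  have hs_upper : s ≤ (2 * u * r + 1) / (2 * c) := by
    rw [div_le_div_iff_of_pos_right (by positivity)]
    nlinarith [sq_max_add_sub_le x r]
  have hs_le_a : s ≤ a :=
    hs_upper.trans ((div_le_div_iff_of_pos_right (by positivity)).mpr (by nlinarith))
  have ha : a ≤ 1 := (div_le_one (by positivity)).mpr hx
  have hs_abs : |s| ≤ 1 := abs_le.mpr ⟨by linarith, by linarith⟩
  have hs_sq : s ^ 2 ≤ (u + 1 / 2) ^ 2 / c ^ 2 := by
    have ha_sq : a ^ 2 = (u + 1 / 2) ^ 2 / c ^ 2 := by simp only [a]; field_simp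
    exact ha_sq ▸ sq_le_sq' hs_lower hs_le_a
  have hexp : exp s ≤ 1 + s + s ^ 2 := by
    linarith [(abs_le.mp (abs_exp_sub_one_sub_id_le hs_abs)).2]
  calc potential c (x + r) = potential c x * exp s := potential_add c x r
    _ ≤ potential c x * (1 + (2 * u * r + 1) / (2 * c) + (u + 1 / 2) ^ 2 / c ^ 2) := by
        gcongr
        · exact (exp_pos _).le
        · linarith
    _ = _ := by rw [weight]; field_simp; ring

lemma potential_le_potential {c c' : ℝ} (hc : 0 < c) (hcc' : c ≤ c') (x : ℝ) :
    potential c' x ≤ potential c x :=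
  exp_le_exp.mpr (div_le_div_of_nonneg_left (sq_nonneg _) (mul_pos two_pos hc) (by linarith))

lemma potential_lt_potential {c c' x : ℝ} (hc : 0 < c) (hcc' : c < c') (hx : 0 < x) :
    potential c' x < potential c x := by
  have : 0 < max x 0 ^ 2 := by positivity
  exact exp_lt_exp.mpr (div_lt_div_of_pos_left this (mul_pos two_pos hc) (by linarith))

lemma potential_rpow {c' : ℝ} (hc' : 0 < c') (c x : ℝ) :
    potential c' x ^ (c' / c) = potential c x := by
  rw [potential, potential, ← exp_mul]
  field_simp

variable {N : ℕ} (H : NormalHedge N) {t : ℕ}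

noncomputable def learnerLoss (t : ℕ) : ℝ := ∑ j, H.p j t * H.loss j t

lemma cast_pos (H : NormalHedge N) : (0 : ℝ) < N := by
  have := H.hN
  positivity

lemma log_pos (H : NormalHedge N) : 0 < log N := by
  have := H.hN
  exact Real.log_pos (by exact_mod_cast this)

lemma sum_potential (ht : 1 ≤ t) : ∑ i, potential (H.c t) (H.R i t) = N * exp 1 := by
  have h : (1 / N : ℝ) * ∑ i, potential (H.c t) (H.R i t) = exp 1 := H.c_eq t ht
  have := H.cast_pos
  field_simp at h
  exact h

lemma sq_max_R_le (ht : 1 ≤ t) (i : Fin N) :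
    max (H.R i t) 0 ^ 2 ≤ 2 * H.c t * (log N + 1) := by
  have hi : potential (H.c t) (H.R i t) ≤ exp (log N + 1) := by
    rw [exp_add, exp_log H.cast_pos, ← H.sum_potential ht]
    exact single_le_sum (f := fun j => potential (H.c t) (H.R j t))
      (fun j _ => (potential_pos _ _).le) (mem_univ i)
  have hc := H.c_pos t ht
  rw [potential, exp_le_exp, div_le_iff₀ (by positivity)] at hi
  linarith

lemma exists_R_pos (ht : 1 ≤ t) : ∃ i, 0 < H.R i t := by
  by_contra! h
  have hone : ∀ i, potential (H.c t) (H.R i t) = 1 := fun i => by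
    simp [potential, max_eq_right (h i)]
  have hsum := H.sum_potential ht
  simp only [hone, sum_const, card_univ, Fintype.card_fin, nsmul_eq_mul, mul_one] at hsum
  nlinarith [H.cast_pos, exp_one_gt_d9]

lemma sum_weight_pos (ht : 1 ≤ t) : 0 < ∑ i, weight (H.c t) (H.R i t) := by
  have hc := H.c_pos t ht
  obtain ⟨j, hj⟩ := H.exists_R_pos ht
  refine sum_pos' (fun i _ => weight_nonneg hc.le _) ⟨j, mem_univ j, ?_⟩
  exact mul_pos (div_pos (lt_max_of_lt_left hj) hc) (exp_pos _)

lemma learnerLoss_succ (ht : 1 ≤ t) :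
    H.learnerLoss (t + 1) = ∑ j, weight (H.c t) (H.R j t) / (∑ k, weight (H.c t) (H.R k t)) *
      H.loss j (t + 1) :=
  sum_congr rfl fun j _ => by rw [H.p_rec j t ht]; rfl

lemma learnerLoss_succ_mem (ht : 1 ≤ t) : H.learnerLoss (t + 1) ∈ Set.Icc (0 : ℝ) 1 := by
  have hW := H.sum_weight_pos ht
  have hq : ∀ j, 0 ≤ weight (H.c t) (H.R j t) / ∑ k, weight (H.c t) (H.R k t) :=
    fun j => div_nonneg (weight_nonneg (H.c_pos t ht).le _) hW.le
  have hloss := fun j => H.loss_mem j (t + 1) (by omega)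
  rw [H.learnerLoss_succ ht]
  refine ⟨sum_nonneg fun j _ => mul_nonneg (hq j) (hloss j).1, ?_⟩
  calc _ ≤ ∑ j, weight (H.c t) (H.R j t) / ∑ k, weight (H.c t) (H.R k t) :=
        sum_le_sum fun j _ => mul_le_of_le_one_right (hq j) (hloss j).2
    _ = 1 := by rw [← sum_div, div_self hW.ne']

lemma abs_learnerLoss_sub_loss_le (ht : 1 ≤ t) (i : Fin N) :
    |H.learnerLoss (t + 1) - H.loss i (t + 1)| ≤ 1 := by
  obtain ⟨hL₀, hL₁⟩ := H.learnerLoss_succ_mem ht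
  obtain ⟨hl₀, hl₁⟩ := H.loss_mem i (t + 1) (by omega)
  exact abs_le.mpr ⟨by linarith, by linarith⟩

lemma sum_weight_mul_regret_eq_zero (ht : 1 ≤ t) :
    ∑ i, weight (H.c t) (H.R i t) * (H.learnerLoss (t + 1) - H.loss i (t + 1)) = 0 := by
  rw [H.learnerLoss_succ ht]
  exact sum_mul_weighted_mean_sub_eq_zero _ _ _ (H.sum_weight_pos ht).ne'

lemma R_succ (i : Fin N) :
    H.R i (t + 1) = H.R i t + (H.learnerLoss (t + 1) - H.loss i (t + 1)) :=
  H.R_rec i t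

lemma sum_potential_succ_ge (ht : 1 ≤ t) :
    N * exp 1 ≤ ∑ i, potential (H.c t) (H.R i (t + 1)) := by
  calc (N : ℝ) * exp 1
      = ∑ i, potential (H.c t) (H.R i t) +
          ∑ i, weight (H.c t) (H.R i t) * (H.learnerLoss (t + 1) - H.loss i (t + 1)) := by
        rw [H.sum_weight_mul_regret_eq_zero ht, H.sum_potential ht, add_zero]
    _ ≤ ∑ i, potential (H.c t) (H.R i (t + 1)) := by
        rw [← sum_add_distrib]
        exact sum_le_sum fun i _ => H.R_succ i ▸ potential_add_weight_mul_le (H.c_pos t ht) _ _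

lemma two_mul_max_R_add_one_le (ht : 1 ≤ t) (hc : 3 + 2 * log N ≤ H.c t) (i : Fin N) :
    2 * max (H.R i t) 0 + 1 ≤ 2 * H.c t := by
  have hc₀ := H.c_pos t ht
  have hlog := H.log_pos
  have hsq : max (H.R i t) 0 ^ 2 ≤ (H.c t - 1 / 2) ^ 2 := by
    nlinarith [H.sq_max_R_le ht i, mul_nonneg hc₀.le (sub_nonneg.mpr hc)]
  have := (pow_le_pow_iff_left₀ (le_max_right _ _) (by linarith) two_ne_zero).mp hsq
  linarith

lemma expansion_error_le (ht : 1 ≤ t) (hc : 3 + 2 * log N ≤ H.c t) (i : Fin N) :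
    1 / (2 * H.c t) + (max (H.R i t) 0 + 1 / 2) ^ 2 / H.c t ^ 2 ≤ (4 + 2 * log N) / H.c t := by
  have hsq := H.sq_max_R_le ht i
  have hu := H.two_mul_max_R_add_one_le ht hc i
  have hc₀ := H.c_pos t ht
  rw [div_add_div _ _ (by positivity) (by positivity), div_le_div_iff₀ (by positivity) hc₀]
  nlinarith

lemma sum_potential_succ_le (ht : 1 ≤ t) (hc : 3 + 2 * log N ≤ H.c t) :
    ∑ i, potential (H.c t) (H.R i (t + 1)) ≤ N * exp 1 * (1 + (4 + 2 * log N) / H.c t) := by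
  set B := (4 + 2 * log N) / H.c t
  calc ∑ i, potential (H.c t) (H.R i (t + 1))
      ≤ ∑ i, (potential (H.c t) (H.R i t) +
          weight (H.c t) (H.R i t) * (H.learnerLoss (t + 1) - H.loss i (t + 1)) +
          potential (H.c t) (H.R i t) * B) := by
        refine sum_le_sum fun i _ => ?_
        rw [H.R_succ i]
        refine (potential_add_le (H.c_pos t ht) (H.abs_learnerLoss_sub_loss_le ht i)
          (H.two_mul_max_R_add_one_le ht hc i)).trans ?_
        gcongr
        · exact (potential_pos _ _).le
        · exact H.expansion_error_le ht hc i
    _ = N * exp 1 * (1 + B) := by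
        rw [sum_add_distrib, sum_add_distrib, ← sum_mul, H.sum_weight_mul_regret_eq_zero ht,
          H.sum_potential ht]
        ring

lemma c_le_c_succ (ht : 1 ≤ t) : H.c t ≤ H.c (t + 1) := by
  by_contra! hlt
  obtain ⟨j, hj⟩ := H.exists_R_pos (t := t + 1) (by omega)
  have hc₁ := H.c_pos (t + 1) (by omega)
  have : ∑ i, potential (H.c t) (H.R i (t + 1)) <
      ∑ i, potential (H.c (t + 1)) (H.R i (t + 1)) :=
    sum_lt_sum (fun i _ => potential_le_potential hc₁ hlt.le _)
      ⟨j, mem_univ j, potential_lt_potential hc₁ hlt hj⟩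
  linarith [H.sum_potential_succ_ge ht, H.sum_potential (t := t + 1) (by omega)]

lemma c_monotoneOn : MonotoneOn H.c {t | 1 ≤ t} :=
  monotoneOn_nat_Ici_of_le_succ fun _ ht => H.c_le_c_succ ht

lemma exp_c_succ_div_c_le (ht : 1 ≤ t) :
    exp (H.c (t + 1) / H.c t) ≤ (1 / N) * ∑ i, potential (H.c t) (H.R i (t + 1)) := by
  have hN := H.cast_pos
  have hc₁ := H.c_pos (t + 1) (by omega)
  have hq : 1 ≤ H.c (t + 1) / H.c t := (one_le_div (H.c_pos t ht)).mpr (H.c_le_c_succ ht)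
  have hmean : ∑ i, (1 / N : ℝ) * potential (H.c (t + 1)) (H.R i (t + 1)) = exp 1 := by
    rw [← mul_sum]
    exact H.c_eq (t + 1) (by omega)
  calc exp (H.c (t + 1) / H.c t)
      = (∑ i, (1 / N : ℝ) * potential (H.c (t + 1)) (H.R i (t + 1))) ^ (H.c (t + 1) / H.c t) := by
        rw [hmean, exp_one_rpow]
    _ ≤ ∑ i, (1 / N : ℝ) * potential (H.c (t + 1)) (H.R i (t + 1)) ^ (H.c (t + 1) / H.c t) :=
        rpow_arith_mean_le_arith_mean_rpow _ _ _ (fun _ _ => by positivity)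
          (by simp [card_univ]; field_simp) (fun i _ => (potential_pos _ _).le) hq
    _ = _ := by simp_rw [potential_rpow hc₁, mul_sum]

lemma c_succ_sub_le (ht : 1 ≤ t) (hc : 3 + 2 * log N ≤ H.c t) :
    H.c (t + 1) - H.c t ≤ 4 + 2 * log N := by
  have hc₀ := H.c_pos t ht
  set q := H.c (t + 1) / H.c t
  have hexp : exp q ≤ exp 1 * (1 + (4 + 2 * log N) / H.c t) :=
    calc exp q ≤ _ := H.exp_c_succ_div_c_le ht
      _ ≤ (1 / N) * (N * exp 1 * (1 + (4 + 2 * log N) / H.c t)) := by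
        gcongr
        exact H.sum_potential_succ_le ht hc
      _ = _ := by field_simp [H.cast_pos.ne']
  have hq : exp 1 * q ≤ exp q :=
    calc exp 1 * q ≤ exp 1 * exp (q - 1) := by gcongr; linarith [add_one_le_exp (q - 1)]
      _ = exp q := by rw [← exp_add]; ring_nf
  have : q ≤ 1 + (4 + 2 * log N) / H.c t := le_of_mul_le_mul_left (hq.trans hexp) (exp_pos 1)
  rw [div_le_iff₀ hc₀, add_mul, div_mul_cancel₀ _ hc₀.ne', one_mul] at this
  linarith

end NormalHedge

/-- Crude per-round growth bound for the scale: if `c t₀ ≥ (16 ln N)/δ²` with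
`0 < δ ≤ 1/2`, then for every `t ≥ t₀`, `c (t+1) - c t ≤ e^δ (4 + 2 ln N)`. -/
theorem normalHedge_scale_increment_bound_crude {N : ℕ} (H : NormalHedge N)
    (t₀ : ℕ) (ht₀ : 1 ≤ t₀) (δ : ℝ) (hδ0 : 0 < δ) (hδ1 : δ ≤ 1 / 2)
    (hc : 16 * Real.log N / δ ^ 2 ≤ H.c t₀)
    (t : ℕ) (ht : t₀ ≤ t) :
    H.c (t + 1) - H.c t ≤ Real.exp δ * (4 + 2 * Real.log N) := by
  have hlog : 3 / 62 ≤ log N := calc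
    (3 / 62 : ℝ) ≤ log 2 := le_trans (by norm_num) log_two_gt_d9.le
    _ ≤ log N := log_le_log two_pos (by exact_mod_cast H.hN)
  have hc_t : 3 + 2 * log N ≤ H.c t := calc
    3 + 2 * log N ≤ 64 * log N := by linarith
    _ ≤ 16 * log N / δ ^ 2 := by
      rw [le_div_iff₀ (by positivity)]
      nlinarith [mul_le_mul_of_nonneg_left (by nlinarith : δ ^ 2 ≤ 1 / 4) H.log_pos.le]
    _ ≤ H.c t₀ := hc
    _ ≤ H.c t := H.c_monotoneOn ht₀ (ht₀.trans ht) ht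
  calc H.c (t + 1) - H.c t ≤ 4 + 2 * log N := H.c_succ_sub_le (ht₀.trans ht) hc_t
    _ ≤ exp δ * (4 + 2 * log N) := le_mul_of_one_le_left (by linarith) (one_le_exp hδ0.le)
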